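/- arXiv:1606.02369 — 3 statements merged into one kernel-verified Lean document; each statement's English description precedes it below -/
import Mathlib

section
/- Let V be an A-module, let ∇̄ : V → V be an A-linear map, and let ϖ_0 : V ⊗_A B → B be a surjective B-linear map such that r·ϖ_0((∇̄⊗id_B)(x)) = μ̂_0·ϖ_0(x) for all x ∈ V ⊗_A B, where μ̂_0 ∈ B is an element whose coefficient of w^1 is nonzero. Then the restriction of ϖ_0 to V, namely the map V → B, a ↦ ϖ_0(a⊗1), is surjective. -/
open Polynomial TensorProduct

noncomputable section

/-- The ring `A = ℂ[z]/(z^m)`. -/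
def Amod (m : ℕ) : Type :=
  Polynomial ℂ ⧸ Ideal.span {(Polynomial.X : Polynomial ℂ) ^ m}

instance (m : ℕ) : CommRing (Amod m) :=
  inferInstanceAs (CommRing (Polynomial ℂ ⧸ Ideal.span {(Polynomial.X : Polynomial ℂ) ^ m}))

instance (m : ℕ) : Algebra ℂ (Amod m) :=
  inferInstanceAs (Algebra ℂ (Polynomial ℂ ⧸ Ideal.span {(Polynomial.X : Polynomial ℂ) ^ m}))

/-- The ring `B = ℂ[w]/(w^N)` with `N = m*r - r + 1`. -/
def Bmod (m r : ℕ) : Type :=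
  Polynomial ℂ ⧸ Ideal.span {(Polynomial.X : Polynomial ℂ) ^ (m * r - r + 1)}

instance (m r : ℕ) : CommRing (Bmod m r) :=
  inferInstanceAs
    (CommRing (Polynomial ℂ ⧸ Ideal.span {(Polynomial.X : Polynomial ℂ) ^ (m * r - r + 1)}))

instance (m r : ℕ) : Algebra ℂ (Bmod m r) :=
  inferInstanceAs
    (Algebra ℂ (Polynomial ℂ ⧸ Ideal.span {(Polynomial.X : Polynomial ℂ) ^ (m * r - r + 1)}))

/-- The class of a polynomial in `A = ℂ[z]/(z^m)`. -/
def Amod.mk (m : ℕ) (p : Polynomial ℂ) : Amod m :=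
  (Ideal.Quotient.mk (Ideal.span {(Polynomial.X : Polynomial ℂ) ^ m}) p : _)

/-- The class of a polynomial in `B = ℂ[w]/(w^N)`. -/
def Bmod.mk (m r : ℕ) (p : Polynomial ℂ) : Bmod m r :=
  (Ideal.Quotient.mk (Ideal.span {(Polynomial.X : Polynomial ℂ) ^ (m * r - r + 1)}) p : _)

/-- The element `z ∈ A`. -/
def Amod.z (m : ℕ) : Amod m := Amod.mk m Polynomial.X

/-- The element `w ∈ B`. -/
def Bmod.w (m r : ℕ) : Bmod m r := Bmod.mk m r Polynomial.X

/-- The coefficient of `w^j` in the unique polynomial representative of degree `< N` of an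
element of `B = ℂ[w]/(w^N)` (for `j < N`). -/
noncomputable def Bmod.coeff (m r : ℕ) (j : ℕ) (b : Bmod m r) : ℂ :=
  ((Quotient.out
      (show Polynomial ℂ ⧸ Ideal.span {(Polynomial.X : Polynomial ℂ) ^ (m * r - r + 1)} from b))
      %ₘ (Polynomial.X ^ (m * r - r + 1))).coeff j

/-- The canonical map `ℂ[z]/(z^m) → ℂ[w]/(w^N)`, `z ↦ w^r` (raw version). -/
noncomputable def AtoB0 (m r : ℕ) [NeZero m] :
    (Polynomial ℂ ⧸ Ideal.span {(Polynomial.X : Polynomial ℂ) ^ m}) →+*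
      (Polynomial ℂ ⧸ Ideal.span {(Polynomial.X : Polynomial ℂ) ^ (m * r - r + 1)}) :=
  Ideal.Quotient.lift (Ideal.span {(Polynomial.X : Polynomial ℂ) ^ m})
    ((Ideal.Quotient.mk (Ideal.span {(Polynomial.X : Polynomial ℂ) ^ (m * r - r + 1)})).comp
      (if 1 ≤ r then (Polynomial.aeval ((Polynomial.X : Polynomial ℂ) ^ r)).toRingHom
       else (Polynomial.aeval (0 : Polynomial ℂ)).toRingHom))
    (by
      intro a ha
      rw [Ideal.mem_span_singleton] at ha
      obtain ⟨c, rfl⟩ := ha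
      rw [map_mul]
      apply mul_eq_zero_of_left
      have hm : 1 ≤ m := Nat.one_le_iff_ne_zero.mpr (NeZero.ne m)
      by_cases h : 1 ≤ r
      · rw [if_pos h, map_pow, RingHom.comp_apply, AlgHom.toRingHom_eq_coe, RingHom.coe_coe,
          Polynomial.aeval_X, ← map_pow, ← pow_mul, Ideal.Quotient.eq_zero_iff_mem,
          Ideal.mem_span_singleton]
        have h1 : r ≤ r * m := Nat.le_mul_of_pos_right r (by omega)
        have h2 : m * r = r * m := Nat.mul_comm m r
        exact pow_dvd_pow _ (by omega)
      · rw [if_neg h, map_pow, RingHom.comp_apply, AlgHom.toRingHom_eq_coe, RingHom.coe_coe,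
          Polynomial.aeval_X, map_zero, zero_pow (NeZero.ne m)])

/-- The canonical map `A → B`, `z ↦ w^r`. -/
noncomputable def AtoB (m r : ℕ) [NeZero m] : Amod m →+* Bmod m r := AtoB0 m r

noncomputable instance (m r : ℕ) [NeZero m] : Algebra (Amod m) (Bmod m r) :=
  (AtoB m r).toAlgebra

/-!
The image `M` of `a ↦ ϖ₀(1 ⊗ a)` is an `A`-submodule of `B`, hence a `ℂ`-subspace; it is stable
under multiplication by `μ̂₀` (compatibility with `∇̄`) and, since its `B`-span is the image `B`
of `ϖ₀`, it contains an element `u` with nonzero constant term. Writing `μ̂₀ = c + wε`, where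
`ε(0)` is the `w¹`-coefficient of `μ̂₀`, the elements `(μ̂₀ - c)ᵏu = wᵏεᵏu ∈ M` have `w`-adic
order exactly `k`, so a downward induction starting from `w^N = 0` gives `wᵏB ⊆ M` for all `k`.
-/

section SubspaceFiltration

variable {K B : Type*} [Field K] [CommRing B] [Algebra K B]

theorem Submodule.pow_mul_mem_of_mul_mem {M : Submodule K B} {μ ν : B} {c : K}
    (hμ : μ = algebraMap K B c + ν) (hμM : ∀ x ∈ M, μ * x ∈ M) (k : ℕ) {x : B} (hx : x ∈ M) :
    ν ^ k * x ∈ M := by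
  induction k with
  | zero => simpa using hx
  | succ k ih =>
    have hν : ν * (ν ^ k * x) = μ * (ν ^ k * x) - c • (ν ^ k * x) := by
      rw [hμ, Algebra.smul_def]; ring
    rw [pow_succ', mul_assoc, hν]
    exact M.sub_mem (hμM _ ih) (M.smul_mem c ih)

theorem Submodule.eq_top_of_mul_mem (φ : B →ₐ[K] K) {t : B} (ht : IsNilpotent t)
    (hker : ∀ b, φ b = 0 → t ∣ b) {M : Submodule K B} {μ ε : B} {c : K}
    (hμ : μ = algebraMap K B c + t * ε) (hε : φ ε ≠ 0) (hμM : ∀ x ∈ M, μ * x ∈ M)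
    {u : B} (hu : u ∈ M) (hφu : φ u ≠ 0) : M = ⊤ := by
  obtain ⟨n, htn⟩ := ht
  have step : ∀ k, (∀ β, t ^ (k + 1) * β ∈ M) → ∀ β, t ^ k * β ∈ M := by
    intro k ih β
    have he : φ (ε ^ k * u) ≠ 0 := by simp [hε, hφu]
    set d := φ β / φ (ε ^ k * u)
    obtain ⟨γ, hγ⟩ := hker (β - d • (ε ^ k * u)) (by
      rw [map_sub, map_smul, smul_eq_mul, div_mul_cancel₀ _ he, sub_self])
    have hβ : t ^ k * β = d • ((t * ε) ^ k * u) + t ^ (k + 1) * γ := by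
      rw [eq_add_of_sub_eq hγ, Algebra.smul_def, Algebra.smul_def]; ring
    rw [hβ]
    exact M.add_mem (M.smul_mem d (M.pow_mul_mem_of_mul_mem hμ hμM k hu)) (ih γ)
  have hall : ∀ β, t ^ 0 * β ∈ M :=
    Nat.decreasingInduction (motive := fun k _ => ∀ β, t ^ k * β ∈ M)
      (fun k _ ih => step k ih) (by simp [htn]) (Nat.zero_le n)
  exact eq_top_iff.mpr fun β _ => by simpa using hall β

end SubspaceFiltration

theorem exists_apply_one_tmul_ne_zero {R S V K : Type*} [CommRing R] [CommRing S] [Algebra R S]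
    [AddCommGroup V] [Module R V] [Semiring K] [Nontrivial K] (φ : S →+* K)
    {ϖ : S ⊗[R] V →ₗ[S] S} (hϖ : Function.Surjective ϖ) : ∃ a, φ (ϖ (1 ⊗ₜ a)) ≠ 0 := by
  by_contra! h
  have hvanish (x : S ⊗[R] V) : φ (ϖ x) = 0 := by
    induction x using TensorProduct.induction_on with
    | zero => simp
    | tmul β a =>
      rw [← mul_one β, ← smul_eq_mul, ← TensorProduct.smul_tmul', map_smul, smul_eq_mul,
        map_mul, h, mul_zero]
    | add x y hx hy => rw [map_add, map_add, hx, hy, add_zero]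
  obtain ⟨x, hx⟩ := hϖ 1
  simpa [hx] using hvanish x

instance (m r : ℕ) [NeZero m] : IsScalarTower ℂ (Amod m) (Bmod m r) :=
  IsScalarTower.of_algebraMap_eq fun c => by
    change _ = AtoB0 m r (Ideal.Quotient.mk _ (Polynomial.C c))
    rw [AtoB0, Ideal.Quotient.lift_mk]
    split_ifs <;> simp <;> rfl

namespace Bmod

variable (m r : ℕ)

def mkₐ : ℂ[X] →ₐ[ℂ] Bmod m r := Ideal.Quotient.mkₐ ℂ _

theorem mkₐ_surjective : Function.Surjective (mkₐ m r) := Ideal.Quotient.mkₐ_surjective _ _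

theorem mkₐ_X : mkₐ m r X = Bmod.w m r := rfl

theorem mkₐ_eq_zero_iff {p : ℂ[X]} : mkₐ m r p = 0 ↔ X ^ (m * r - r + 1) ∣ p :=
  Ideal.Quotient.eq_zero_iff_mem.trans Ideal.mem_span_singleton

def eval₀ : Bmod m r →ₐ[ℂ] ℂ :=
  Ideal.Quotient.liftₐ _ (Polynomial.aeval 0) fun p hp => by
    obtain ⟨q, rfl⟩ := Ideal.mem_span_singleton.mp hp
    simp

theorem eval₀_mkₐ (p : ℂ[X]) : eval₀ m r (mkₐ m r p) = p.coeff 0 := by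
  rw [Polynomial.coeff_zero_eq_aeval_zero]
  exact Ideal.Quotient.liftₐ_apply _ _ _ _

theorem isNilpotent_w : IsNilpotent (Bmod.w m r) :=
  ⟨m * r - r + 1, by rw [← mkₐ_X, ← map_pow, mkₐ_eq_zero_iff]⟩

theorem w_dvd_of_eval₀_eq_zero (b : Bmod m r) (hb : eval₀ m r b = 0) : Bmod.w m r ∣ b := by
  obtain ⟨p, rfl⟩ := mkₐ_surjective m r b
  obtain ⟨q, rfl⟩ := Polynomial.X_dvd_iff.mpr (by rwa [eval₀_mkₐ] at hb)
  exact ⟨mkₐ m r q, by rw [map_mul, mkₐ_X]⟩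

theorem coeff_mkₐ {k : ℕ} (hk : k < m * r - r + 1) (p : ℂ[X]) :
    Bmod.coeff m r k (mkₐ m r p) = p.coeff k := by
  set o := Quotient.out (show ℂ[X] ⧸ Ideal.span {(X : ℂ[X]) ^ (m * r - r + 1)} from
    mkₐ m r p)
  have hop : X ^ (m * r - r + 1) ∣ o - p := by
    rw [← mkₐ_eq_zero_iff, map_sub, sub_eq_zero]
    exact Quotient.out_eq _
  have hdvd : X ^ (m * r - r + 1) ∣ o %ₘ X ^ (m * r - r + 1) - p := by
    have := modByMonic_add_div o (X ^ (m * r - r + 1))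
    rw [show o %ₘ X ^ (m * r - r + 1) - p
      = (o - p) - X ^ (m * r - r + 1) * (o /ₘ X ^ (m * r - r + 1)) by linear_combination this]
    exact dvd_sub hop (dvd_mul_right _ _)
  have := Polynomial.X_pow_dvd_iff.mp hdvd k hk
  rwa [Polynomial.coeff_sub, sub_eq_zero] at this

theorem exists_eq_algebraMap_add_w_mul (hN : 1 < m * r - r + 1) (μ : Bmod m r) :
    ∃ (c : ℂ) (ε : Bmod m r), μ = algebraMap ℂ _ c + Bmod.w m r * ε ∧
      eval₀ m r ε = Bmod.coeff m r 1 μ := by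
  obtain ⟨p, rfl⟩ := mkₐ_surjective m r μ
  refine ⟨p.coeff 0, mkₐ m r p.divX, ?_, ?_⟩
  · conv_lhs => rw [← Polynomial.divX_mul_X_add p]
    rw [map_add, map_mul, mkₐ_X, Polynomial.C_eq_algebraMap, AlgHom.commutes, mul_comm, add_comm]
  · rw [eval₀_mkₐ, Polynomial.coeff_divX, coeff_mkₐ m r hN]

end Bmod

/-- If `V` is an `A`-module carrying an `A`-linear map `∇̄` compatible, via a
surjective `B`-linear map `ϖ₀ : B ⊗[A] V → B`, with multiplication by an element `μ̂₀ ∈ B`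
whose `w¹`-coefficient is nonzero, then the restriction `V → B`, `a ↦ ϖ₀(a ⊗ 1)`, is
surjective. -/
theorem statement5 (m r : ℕ) (hm : 2 ≤ m) (hr : 1 ≤ r) [NeZero m]
    (V : Type*) [AddCommGroup V] [Module (Amod m) V]
    (Db : V →ₗ[Amod m] V)
    (ϖ : Bmod m r ⊗[Amod m] V →ₗ[Bmod m r] Bmod m r)
    (hϖ : Function.Surjective ϖ)
    (μ : Bmod m r) (hμ : Bmod.coeff m r 1 μ ≠ 0)
    (hcompat : ∀ x : Bmod m r ⊗[Amod m] V,
      (r : ℕ) • ϖ (LinearMap.lTensor (Bmod m r) Db x) = μ * ϖ x) :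
    Function.Surjective (fun a : V => ϖ ((1 : Bmod m r) ⊗ₜ a)) := by
  have hN : 1 < m * r - r + 1 := by
    have := Nat.mul_le_mul_right r hm
    omega
  let f : V →ₗ[Amod m] Bmod m r :=
    (ϖ.restrictScalars (Amod m)).comp (TensorProduct.mk (Amod m) (Bmod m r) V 1)
  let M : Submodule ℂ (Bmod m r) := (LinearMap.range f).restrictScalars ℂ
  obtain ⟨c, ε, hμε, hε⟩ := Bmod.exists_eq_algebraMap_add_w_mul m r hN μ
  obtain ⟨a₀, ha₀⟩ := exists_apply_one_tmul_ne_zero (Bmod.eval₀ m r).toRingHom hϖ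
  have hμM : ∀ x ∈ M, μ * x ∈ M := by
    rintro _ ⟨a, rfl⟩
    refine ⟨r • Db a, ?_⟩
    simpa [f] using hcompat (1 ⊗ₜ a)
  have hM : M = ⊤ := Submodule.eq_top_of_mul_mem (Bmod.eval₀ m r) (Bmod.isNilpotent_w m r)
    (Bmod.w_dvd_of_eval₀_eq_zero m r) hμε (hε ▸ hμ) hμM ⟨a₀, rfl⟩ ha₀
  exact LinearMap.range_eq_top.mp (Submodule.restrictScalars_eq_top_iff _ _ _ |>.mp hM)

end
end

section
/- Let N ≥ 1 be an integer and let ν̄ ∈ ℂ[w]/(w^N) be an element whose coefficient of w^1 is nonzero. If M ⊆ ℂ[w]/(w^N) is a ℂ-linear subspace such that ν̄·M ⊆ M and M contains an element whose coefficient of w^0 (constant term) is nonzero, then M = ℂ[w]/(w^N). -/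
open Polynomial

noncomputable section

/-- The ring `ℂ[w]/(w^N)`. -/
def BN (N : ℕ) : Type :=
  Polynomial ℂ ⧸ Ideal.span {(Polynomial.X : Polynomial ℂ) ^ N}

instance (N : ℕ) : CommRing (BN N) :=
  inferInstanceAs (CommRing (Polynomial ℂ ⧸ Ideal.span {(Polynomial.X : Polynomial ℂ) ^ N}))

instance (N : ℕ) : Algebra ℂ (BN N) :=
  inferInstanceAs (Algebra ℂ (Polynomial ℂ ⧸ Ideal.span {(Polynomial.X : Polynomial ℂ) ^ N}))

/-- The class of a polynomial in `ℂ[w]/(w^N)`. -/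
def BN.mk (N : ℕ) (p : Polynomial ℂ) : BN N :=
  (Ideal.Quotient.mk (Ideal.span {(Polynomial.X : Polynomial ℂ) ^ N}) p : _)

/-- The coefficient of `w^j` in the unique polynomial representative of degree `< N` of an
element of `ℂ[w]/(w^N)` (for `j < N`). -/
noncomputable def BN.coeff (N j : ℕ) (b : BN N) : ℂ :=
  ((Quotient.out
      (show Polynomial ℂ ⧸ Ideal.span {(Polynomial.X : Polynomial ℂ) ^ N} from b))
      %ₘ (Polynomial.X ^ N)).coeff j

/-! Subtracting its constant term `c`, we get `ν - c = w * u` with `u` a unit. Multiplication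
by `ν - c` preserves `M`, and for `x ∈ M` with nonzero constant term `(ν - c)^i x = w^i u^i x`
vanishes for `i = N` but not for `i = N - 1`. A vector killed by the `N`-th but not by the
`(N - 1)`-th power of an operator has `N` linearly independent iterates, and these span the
`N`-dimensional space `ℂ[w]/(w^N)`. -/

theorem Module.End.linearIndependent_pow_apply {K V : Type*} [DivisionRing K] [AddCommGroup V]
    [Module K V] (T : Module.End K V) {x : V} {n : ℕ} (hzero : (T ^ (n + 1)) x = 0)
    (hne : (T ^ n) x ≠ 0) :
    LinearIndependent K (fun i : Fin (n + 1) => (T ^ (i : ℕ)) x) := by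
  induction n generalizing x with
  | zero => simpa [linearIndependent_unique_iff] using hne
  | succ n ih =>
    rw [linearIndependent_finSucc]
    have hshift : Fin.tail (fun i : Fin (n + 2) => (T ^ (i : ℕ)) x)
        = fun i : Fin (n + 1) => (T ^ (i : ℕ)) (T x) := by
      ext i; simp [Fin.tail, pow_succ, Module.End.mul_apply]
    refine ⟨hshift ▸ ih ?_ ?_, fun hx => hne ?_⟩
    · rwa [← Module.End.mul_apply, ← pow_succ]
    · rwa [← Module.End.mul_apply, ← pow_succ]
    · have hkill : Submodule.span K (Set.range (Fin.tail fun i : Fin (n + 2) => (T ^ (i : ℕ)) x))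
          ≤ LinearMap.ker (T ^ (n + 1)) := by
        rw [Submodule.span_le, hshift]
        rintro _ ⟨i, rfl⟩
        rw [SetLike.mem_coe, LinearMap.mem_ker, ← Module.End.mul_apply, ← Module.End.mul_apply,
          ← pow_add, ← pow_succ, show n + 1 + i + 1 = i + (n + 2) by omega, pow_add,
          Module.End.mul_apply, hzero, map_zero]
      simpa using hkill hx

namespace BN

variable {N : ℕ}

theorem mk_add (p q : ℂ[X]) : BN.mk N (p + q) = BN.mk N p + BN.mk N q := rfl

theorem mk_mul (p q : ℂ[X]) : BN.mk N (p * q) = BN.mk N p * BN.mk N q := rfl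

theorem mk_pow (p : ℂ[X]) (k : ℕ) : BN.mk N (p ^ k) = BN.mk N p ^ k := rfl

theorem mk_C (c : ℂ) : BN.mk N (C c) = algebraMap ℂ (BN N) c := rfl

theorem mk_eq_mk_iff {p q : ℂ[X]} : BN.mk N p = BN.mk N q ↔ X ^ N ∣ p - q :=
  Ideal.Quotient.eq.trans Ideal.mem_span_singleton

theorem mk_eq_zero_iff {p : ℂ[X]} : BN.mk N p = 0 ↔ X ^ N ∣ p :=
  Ideal.Quotient.eq_zero_iff_mem.trans Ideal.mem_span_singleton

theorem mk_X_pow_mul_eq_zero_iff {n : ℕ} {q : ℂ[X]} :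
    BN.mk (n + 1) (X ^ n * q) = 0 ↔ q.coeff 0 = 0 := by
  rw [mk_eq_zero_iff, pow_succ, mul_dvd_mul_iff_left (pow_ne_zero _ X_ne_zero), X_dvd_iff]

theorem exists_mk_eq_and_coeff_eq (b : BN N) :
    ∃ p : ℂ[X], BN.mk N p = b ∧ ∀ j, BN.coeff N j b = p.coeff j := by
  set q : ℂ[X] := Quotient.out (show ℂ[X] ⧸ Ideal.span {(X : ℂ[X]) ^ N} from b)
  exact ⟨q %ₘ X ^ N, (mk_eq_mk_iff.2 (dvd_modByMonic_sub q _)).trans (Quotient.out_eq _),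
    fun j => rfl⟩

theorem finrank_eq (N : ℕ) : Module.finrank ℂ (BN N) = N :=
  finrank_quotient_span_eq_natDegree.trans (natDegree_X_pow N)

theorem mk_X_mul_divX (m : ℂ[X]) :
    BN.mk N (X * divX m) = BN.mk N m - algebraMap ℂ (BN N) (m.coeff 0) := by
  rw [eq_sub_iff_add_eq, ← mk_C, ← mk_add, X_mul_divX_add]

theorem mk_X_mul_pow_mul (u p : ℂ[X]) (k : ℕ) :
    BN.mk N (X * u) ^ k * BN.mk N p = BN.mk N (X ^ k * (u ^ k * p)) := by
  rw [← mk_pow, ← mk_mul, mul_pow, mul_assoc]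

end BN

/-- Let `N ≥ 1` and let `ν̄ ∈ ℂ[w]/(w^N)` have nonzero `w¹`-coefficient.
Any `ℂ`-subspace `M ⊆ ℂ[w]/(w^N)` stable under multiplication by `ν̄` and containing an
element with nonzero constant term is all of `ℂ[w]/(w^N)`. -/
theorem statement9 (N : ℕ) (hN : 1 ≤ N) (ν : BN N) (hν : BN.coeff N 1 ν ≠ 0)
    (M : Submodule ℂ (BN N)) (hmul : ∀ x ∈ M, ν * x ∈ M)
    (hconst : ∃ x ∈ M, BN.coeff N 0 x ≠ 0) :
    M = ⊤ := by
  obtain ⟨n, rfl⟩ := Nat.exists_eq_add_of_le' hN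
  obtain ⟨m, rfl, hm⟩ := BN.exists_mk_eq_and_coeff_eq ν
  obtain ⟨x, hxM, hx0⟩ := hconst
  obtain ⟨p, rfl, hp⟩ := BN.exists_mk_eq_and_coeff_eq x
  rw [hm] at hν
  rw [hp] at hx0
  let T : Module.End ℂ (BN (n + 1)) := LinearMap.mulLeft ℂ (BN.mk _ (X * divX m))
  have hT : ∀ k, (T ^ k) (BN.mk _ p) = BN.mk _ (X ^ k * (divX m ^ k * p)) := fun k => by
    rw [LinearMap.pow_mulLeft, LinearMap.mulLeft_apply, BN.mk_X_mul_pow_mul]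
  have hTM : ∀ y ∈ M, T y ∈ M := fun y hy => by
    rw [LinearMap.mulLeft_apply, BN.mk_X_mul_divX, sub_mul, ← Algebra.smul_def]
    exact M.sub_mem (hmul y hy) (M.smul_mem _ hy)
  have hzero : (T ^ (n + 1)) (BN.mk _ p) = 0 := by
    rw [hT, BN.mk_eq_zero_iff]
    exact dvd_mul_right _ _
  have hne : (T ^ n) (BN.mk _ p) ≠ 0 := by
    rw [hT, Ne, BN.mk_X_pow_mul_eq_zero_iff, mul_coeff_zero, ← constantCoeff_apply, map_pow,
      constantCoeff_apply, coeff_divX]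
    exact mul_ne_zero (pow_ne_zero _ hν) hx0
  have hspan := (T.linearIndependent_pow_apply hzero hne).span_eq_top_of_card_eq_finrank
    (by rw [Fintype.card_fin, BN.finrank_eq])
  rw [eq_top_iff, ← hspan, Submodule.span_le]
  rintro _ ⟨i, rfl⟩
  exact Module.End.pow_apply_mem_of_forall_mem _ hTM _ hxM

end
end

section
/- Let m ≥ 1 and r ≥ 1, let (W,∇) be a formally irreducible formal connection with pole order m on a nonzero free ℂ[[z]]-module W of rank r, and let π : W ⊗_{ℂ[[z]]} ℂ[[w]] → ℂ[[w]] be a surjective ℂ[[w]]-linear map satisfying π∘D = ∇_{ν̃}∘π for some ν̃ ∈ ℂ[[w]]. Then the ℂ[[z]]-linear map W → ℂ[[w]], a ↦ π(a⊗1), is injective, and its cokernel is a ℂ[[z]]-module of finite length. -/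
open PowerSeries TensorProduct

noncomputable section

/-- A formal connection with pole order `m` on a `ℂ[[z]]`-module `W`, written in the
trivializing frame `dz/z^m`: an additive map `Dc : W → W` satisfying
`Dc(f • a) = (z^m * f') • a + f • Dc a`. -/
def IsFormalConnection (m : ℕ) {W : Type*} [AddCommGroup W] [Module (PowerSeries ℂ) W]
    (Dc : W →+ W) : Prop :=
  ∀ (f : PowerSeries ℂ) (a : W),
    Dc (f • a) = ((X : PowerSeries ℂ) ^ m * PowerSeries.derivative ℂ f) • a + f • Dc a

/-- The ring `ℂ[[w]]`, regarded as a `ℂ[[z]]`-algebra via `z = w^r`. -/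
def Cw (_r : ℕ) : Type := PowerSeries ℂ

instance (r : ℕ) : CommRing (Cw r) := inferInstanceAs (CommRing (PowerSeries ℂ))

/-- The substitution ring homomorphism `ℂ[[z]] → ℂ[[w]]`, `f(z) ↦ f(w^r)`. -/
noncomputable def substPow (r : ℕ) : PowerSeries ℂ →+* Cw r :=
  if h : 0 < r then
    (HahnSeries.toPowerSeries.toRingHom.comp
      ((HahnSeries.embDomainRingHom (AddMonoidHom.mulLeft r)
          (fun a b hab => Nat.eq_of_mul_eq_mul_left h (by simpa using hab))
          (fun a b => by
            simp only [AddMonoidHom.coe_mulLeft]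
            exact ⟨fun hh => Nat.le_of_mul_le_mul_left hh h,
              fun hh => Nat.mul_le_mul_left _ hh⟩)).comp
        HahnSeries.toPowerSeries.symm.toRingHom))
  else (PowerSeries.C (R := ℂ)).comp (PowerSeries.constantCoeff (R := ℂ))

noncomputable instance (r : ℕ) : Algebra (PowerSeries ℂ) (Cw r) := (substPow r).toAlgebra

/-- The element `w ∈ ℂ[[w]]`. -/
def Cw.w (r : ℕ) : Cw r := (PowerSeries.X : PowerSeries ℂ)

/-- The formal derivative `d/dw` on `ℂ[[w]]`. -/
noncomputable def Cw.deriv {r : ℕ} (f : Cw r) : Cw r :=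
  (PowerSeries.derivative ℂ (show PowerSeries ℂ from f) : PowerSeries ℂ)

/-- The coefficient of `w^n` in an element of `ℂ[[w]]`. -/
noncomputable def Cw.coeff {r : ℕ} (n : ℕ) (f : Cw r) : ℂ :=
  PowerSeries.coeff (R := ℂ) n (show PowerSeries ℂ from f)

/-- `(W,∇)` is formally irreducible if the only `∇`-invariant subbundles (submodules with
free quotient, i.e. torsion-free quotient) are `0` and `W`. -/
def FormallyIrreducible {W : Type*} [AddCommGroup W] [Module (PowerSeries ℂ) W]
    (Dc : W →+ W) : Prop :=
  ∀ p : Submodule (PowerSeries ℂ) W, Module.Free (PowerSeries ℂ) (W ⧸ p) →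
    (∀ a ∈ p, Dc a ∈ p) → p = ⊥ ∨ p = ⊤

/-!
The kernel of `a ↦ π(1 ⊗ a)` is a `∇`-stable subbundle: it is `∇`-stable because `π` intertwines
`D = r∇ + w^N d/dw` with `∇_ν` and `r ≠ 0`, and the quotient embeds in the torsion-free
`ℂ[[z]]`-module `ℂ[[w]]`, hence is free over the principal ideal domain `ℂ[[z]]`. By irreducibility
the kernel is `0` or `W`, and it is not `W` since `π` is surjective. The image is then a
rank `r` submodule of `ℂ[[w]] ≅ ℂ[[z]]^r` (basis `1, w, …, w^(r-1)`), so the cokernel is a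
finitely generated torsion module over the one-dimensional noetherian ring `ℂ[[z]]`, hence of
finite length.
-/
namespace Cw

variable {r : ℕ}

instance : IsDomain (Cw r) := inferInstanceAs (IsDomain (PowerSeries ℂ))

instance : CharZero (Cw r) := (PowerSeries.constantCoeff (R := ℂ)).charZero

theorem ext {f g : Cw r} (h : ∀ n, Cw.coeff n f = Cw.coeff n g) : f = g :=
  PowerSeries.ext h

@[simp]
theorem deriv_zero : Cw.deriv (0 : Cw r) = 0 :=
  map_zero (PowerSeries.derivative ℂ)

@[simp]
theorem deriv_one : Cw.deriv (1 : Cw r) = 0 :=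
  (PowerSeries.derivative ℂ).map_one_eq_zero

theorem coeff_mul_w_pow (f : Cw r) (j k : ℕ) :
    Cw.coeff k (f * Cw.w r ^ j) = if j ≤ k then Cw.coeff (k - j) f else 0 :=
  PowerSeries.coeff_mul_X_pow' (show PowerSeries ℂ from f) j k

theorem coeff_substPow_mul (hr : 0 < r) (f : PowerSeries ℂ) (n : ℕ) :
    Cw.coeff (r * n) (substPow r f) = PowerSeries.coeff n f := by
  rw [Cw.coeff, show substPow r = _ from dif_pos hr]
  simp only [RingHom.coe_comp, Function.comp_apply, RingEquiv.toRingHom_eq_coe,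
    RingEquiv.coe_toRingHom]
  erw [HahnSeries.coeff_toPowerSeries]
  exact (HahnSeries.embDomain_coeff (Γ := ℕ) (Γ' := ℕ) (R := ℂ) (a := n)).trans
    HahnSeries.coeff_toPowerSeries_symm

theorem coeff_substPow_of_not_dvd (hr : 0 < r) (f : PowerSeries ℂ) {k : ℕ} (hk : ¬ r ∣ k) :
    Cw.coeff k (substPow r f) = 0 := by
  rw [Cw.coeff, show substPow r = _ from dif_pos hr]
  refine HahnSeries.embDomain_of_notMem_range fun ⟨n, hn⟩ => hk ⟨n, ?_⟩
  simpa using hn.symm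

theorem substPow_injective (hr : 0 < r) : Function.Injective (substPow r) := by
  refine (injective_iff_map_eq_zero _).mpr fun f hf => PowerSeries.ext fun n => ?_
  rw [← coeff_substPow_mul hr, hf]
  exact map_zero (PowerSeries.coeff n)

theorem faithfulSMul (hr : 0 < r) : FaithfulSMul (PowerSeries ℂ) (Cw r) :=
  (faithfulSMul_iff_algebraMap_injective _ _).mpr (substPow_injective hr)

theorem coeff_smul_w_pow (hr : 0 < r) (g : PowerSeries ℂ) (i j : Fin r) (n : ℕ) :
    Cw.coeff (r * n + i) (g • Cw.w r ^ (j : ℕ)) = if j = i then PowerSeries.coeff n g else 0 := by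
  rw [Algebra.smul_def, coeff_mul_w_pow]
  split_ifs with hle hji hji
  · subst hji
    rw [Nat.add_sub_cancel]
    exact coeff_substPow_mul hr g n
  · refine coeff_substPow_of_not_dvd hr g fun ⟨t, ht⟩ => hji (Fin.ext ?_)
    have hmod := congrArg (· % r) (show r * n + i = r * t + j by omega)
    simpa [Nat.mul_add_mod, Nat.mod_eq_of_lt i.2, Nat.mod_eq_of_lt j.2] using hmod.symm
  · exact absurd (hji ▸ Nat.le_add_left _ _) hle
  · rfl

theorem coeff_linearCombination_w_pow (hr : 0 < r) (g : Fin r → PowerSeries ℂ) (i : Fin r)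
    (n : ℕ) :
    Cw.coeff (r * n + i)
      (Fintype.linearCombination (PowerSeries ℂ) (fun j : Fin r => Cw.w r ^ (j : ℕ)) g)
      = PowerSeries.coeff n (g i) := by
  rw [Fintype.linearCombination_apply]
  calc Cw.coeff (r * n + i) (∑ j, g j • Cw.w r ^ (j : ℕ))
      = ∑ j, Cw.coeff (r * n + i) (g j • Cw.w r ^ (j : ℕ)) :=
        map_sum (PowerSeries.coeff _) _ _
    _ = PowerSeries.coeff n (g i) := by simp [coeff_smul_w_pow hr]

theorem bijective_linearCombination_w_pow (hr : 0 < r) :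
    Function.Bijective
      (Fintype.linearCombination (PowerSeries ℂ) (fun j : Fin r => Cw.w r ^ (j : ℕ))) := by
  refine ⟨(injective_iff_map_eq_zero _).mpr fun g hg =>
      funext fun i => PowerSeries.ext fun n => ?_,
    fun f => ⟨fun i => PowerSeries.mk fun n => Cw.coeff (r * n + i) f, Cw.ext fun k => ?_⟩⟩
  · rw [← coeff_linearCombination_w_pow hr, hg]
    exact map_zero (PowerSeries.coeff _)
  · obtain ⟨n, i, rfl⟩ : ∃ (n : ℕ) (i : Fin r), k = r * n + i :=
      ⟨k / r, ⟨k % r, Nat.mod_lt k hr⟩, (Nat.div_add_mod k r).symm⟩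
    rw [coeff_linearCombination_w_pow hr, PowerSeries.coeff_mk]

def wPowBasis (hr : 0 < r) : Module.Basis (Fin r) (PowerSeries ℂ) (Cw r) :=
  .ofEquivFun (LinearEquiv.ofBijective _ (bijective_linearCombination_w_pow hr)).symm

theorem finite (hr : 0 < r) : Module.Finite (PowerSeries ℂ) (Cw r) :=
  .of_basis (wPowBasis hr)

theorem finrank_eq (hr : 0 < r) : Module.finrank (PowerSeries ℂ) (Cw r) = r := by
  simpa using Module.finrank_eq_card_basis (wPowBasis hr)

end Cw

theorem LinearMap.free_quotient_ker {R M N : Type*} [CommRing R] [IsDomain R]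
    [IsPrincipalIdealRing R] [AddCommGroup M] [Module R M] [Module.Finite R M] [AddCommGroup N]
    [Module R N] [Module.IsTorsionFree R N] (f : M →ₗ[R] N) : Module.Free R (M ⧸ LinearMap.ker f) :=
  have : Module.IsTorsionFree R (M ⧸ LinearMap.ker f) :=
    (Subtype.val_injective.comp f.quotKerEquivRange.injective).moduleIsTorsionFree _
      fun c x => by simp
  Module.free_of_finite_type_torsion_free'

theorem Submodule.isTorsion_quotient_of_finrank_eq {R M : Type*} [CommRing R] [IsDomain R]
    [AddCommGroup M] [Module R M] [Module.Finite R M] (N : Submodule R M)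
    (h : Module.finrank R N = Module.finrank R M) : Module.IsTorsion R (M ⧸ N) := by
  have h0 : Module.finrank R (M ⧸ N) = 0 := by
    have := N.finrank_quotient_add_finrank
    omega
  intro x
  obtain ⟨a, ha, hax⟩ := Module.finrank_eq_zero_iff.mp h0 x
  exact ⟨⟨a, mem_nonZeroDivisors_of_ne_zero ha⟩, hax⟩

theorem Module.IsTorsion.isFiniteLength {R M : Type*} [CommRing R] [IsNoetherianRing R]
    [Ring.KrullDimLE 1 R] [AddCommGroup M] [Module R M] [Module.Finite R M]
    (hM : Module.IsTorsion R M) : IsFiniteLength R M := by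
  obtain ⟨c, hc, hc0⟩ := Submodule.annihilator_top_inter_nonZeroDivisors hM
  let I := Ideal.span {c}
  have hI : Module.IsTorsionBySet R M I :=
    (Module.isTorsionBySet_span_singleton_iff c).mpr fun x =>
      Submodule.mem_annihilator.mp hc x Submodule.mem_top
  let := hI.module
  have : IsArtinianRing (R ⧸ I) :=
    isArtinian_of_tower R (isFiniteLength_iff_isNoetherian_isArtinian.mp
      (isFiniteLength_quotient_span_singleton R hc0)).2
  have : Module.Finite (R ⧸ I) M := .of_restrictScalars_finite R _ _
  have : IsArtinian R M :=
    isArtinian_of_surjective_algebraMap (Ideal.Quotient.mk_surjective (I := I))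
  exact isFiniteLength_iff_isNoetherian_isArtinian.mpr ⟨inferInstance, this⟩

open TensorProduct.AlgebraTensorModule in
/-- The kernel of `a ↦ π(1 ⊗ a)` is `∇`-stable: applying `π ∘ D = ∇_ν ∘ π` to `1 ⊗ a` gives
`r · π(1 ⊗ ∇a) = w^N (π(1 ⊗ a))' + ν π(1 ⊗ a)`, and `ℂ[[w]]` has characteristic zero. -/
theorem connection_mem_ker_curry_one {m r : ℕ} (hr : 0 < r) {W : Type*} [AddCommGroup W]
    [Module (PowerSeries ℂ) W] {Dc : W →+ W}
    {D : Cw r ⊗[PowerSeries ℂ] W →+ Cw r ⊗[PowerSeries ℂ] W}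
    (hD : ∀ (g : Cw r) (a : W),
      D (g ⊗ₜ a) = r • ((g ⊗ₜ[PowerSeries ℂ] Dc a))
        + (Cw.w r ^ (m * r - r + 1) * Cw.deriv g) ⊗ₜ a)
    {π : Cw r ⊗[PowerSeries ℂ] W →ₗ[Cw r] Cw r} {ν : Cw r}
    (hcompat : ∀ x, π (D x) = Cw.w r ^ (m * r - r + 1) * Cw.deriv (π x) + ν * π x)
    {a : W} (ha : a ∈ LinearMap.ker (curry π 1)) : Dc a ∈ LinearMap.ker (curry π 1) := by
  have ha : π (1 ⊗ₜ a) = 0 := ha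
  have h := hcompat (1 ⊗ₜ a)
  rw [hD, Cw.deriv_one, mul_zero, zero_tmul, add_zero, map_nsmul, ha, Cw.deriv_zero, mul_zero,
    mul_zero, add_zero, smul_eq_zero] at h
  exact h.resolve_left hr.ne'

theorem statement12_general (m r : ℕ) (hr : 1 ≤ r)
    (W : Type*) [AddCommGroup W] [Module (PowerSeries ℂ) W]
    [Module.Finite (PowerSeries ℂ) W]
    (hrank : Module.finrank (PowerSeries ℂ) W = r)
    (Dc : W →+ W)
    (hirr : FormallyIrreducible Dc)
    (D : Cw r ⊗[PowerSeries ℂ] W →+ Cw r ⊗[PowerSeries ℂ] W)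
    (hD : ∀ (g : Cw r) (a : W),
      D (g ⊗ₜ a) = r • ((g ⊗ₜ[PowerSeries ℂ] Dc a))
        + (Cw.w r ^ (m * r - r + 1) * Cw.deriv g) ⊗ₜ a)
    (π : Cw r ⊗[PowerSeries ℂ] W →ₗ[Cw r] Cw r) (hπ : Function.Surjective π)
    (ν : Cw r)
    (hcompat : ∀ x, π (D x) =
      Cw.w r ^ (m * r - r + 1) * Cw.deriv (π x) + ν * π x) :
    ∃ pL : W →ₗ[PowerSeries ℂ] Cw r,
      (∀ a : W, pL a = π ((1 : Cw r) ⊗ₜ a)) ∧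
      Function.Injective pL ∧
      IsFiniteLength (PowerSeries ℂ) (Cw r ⧸ LinearMap.range pL) := by
  have := Cw.faithfulSMul hr
  have := Cw.finite hr
  let pL := TensorProduct.AlgebraTensorModule.curry π 1
  have hinj : Function.Injective pL := by
    rcases hirr _ pL.free_quotient_ker fun a => connection_mem_ker_curry_one hr hD hcompat with h | h
    · exact LinearMap.ker_eq_bot.mp h
    · have hπ0 : π = 0 := TensorProduct.AlgebraTensorModule.curry_injective <|
        LinearMap.ext_ring <| LinearMap.ext fun a => (h ▸ Submodule.mem_top : a ∈ LinearMap.ker pL)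
      obtain ⟨x, hx⟩ := hπ 1
      exact absurd (hx.symm.trans (LinearMap.congr_fun hπ0 x)) one_ne_zero
  refine ⟨pL, fun a => rfl, hinj, Module.IsTorsion.isFiniteLength ?_⟩
  refine Submodule.isTorsion_quotient_of_finrank_eq _ ?_
  rw [LinearMap.finrank_range_of_inj hinj, hrank, Cw.finrank_eq hr]

/-- Let `(W,∇)` be a formally irreducible formal connection with pole order
`m ≥ 1` on a nonzero free `ℂ[[z]]`-module of rank `r ≥ 1`, and let `π : W ⊗ ℂ[[w]] → ℂ[[w]]`
be a surjective `ℂ[[w]]`-linear map intertwining the induced connection `D` with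
`∇_ν̃ = d + ν̃ ω`.  Then the restriction `W → ℂ[[w]]`, `a ↦ π(a ⊗ 1)`, is injective with
cokernel of finite length over `ℂ[[z]]`. -/
theorem statement12 (m r : ℕ) (hm : 1 ≤ m) (hr : 1 ≤ r)
    (W : Type*) [AddCommGroup W] [Module (PowerSeries ℂ) W]
    [Module.Finite (PowerSeries ℂ) W] [Module.Free (PowerSeries ℂ) W] [Nontrivial W]
    (hrank : Module.finrank (PowerSeries ℂ) W = r)
    (Dc : W →+ W) (hDc : IsFormalConnection m Dc)
    (hirr : FormallyIrreducible Dc)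
    (D : Cw r ⊗[PowerSeries ℂ] W →+ Cw r ⊗[PowerSeries ℂ] W)
    (hD : ∀ (g : Cw r) (a : W),
      D (g ⊗ₜ a) = r • ((g ⊗ₜ[PowerSeries ℂ] Dc a))
        + (Cw.w r ^ (m * r - r + 1) * Cw.deriv g) ⊗ₜ a)
    (π : Cw r ⊗[PowerSeries ℂ] W →ₗ[Cw r] Cw r) (hπ : Function.Surjective π)
    (ν : Cw r)
    (hcompat : ∀ x, π (D x) =
      Cw.w r ^ (m * r - r + 1) * Cw.deriv (π x) + ν * π x) :
    ∃ pL : W →ₗ[PowerSeries ℂ] Cw r,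
      (∀ a : W, pL a = π ((1 : Cw r) ⊗ₜ a)) ∧
      Function.Injective pL ∧
      IsFiniteLength (PowerSeries ℂ) (Cw r ⧸ LinearMap.range pL) :=
  statement12_general m r hr W hrank Dc hirr D hD π hπ ν hcompat

end
end
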